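/- Let g, h be n-variable Boolean functions and let G(X₁,…,X_{n+3}) = X_{n+3} ⊕ X_{n+2} ⊕ (1⊕X_{n+1})g(X₁,…,Xₙ) ⊕ X_{n+1}h(X₁,…,Xₙ). Then AI(G) ≥ min{AI(g), AI(h)}. -/

import Mathlib

open Finset

abbrev BF (n : ℕ) := (Fin n → ZMod 2) → ZMod 2

def bfInner {n : ℕ} (a x : Fin n → ZMod 2) : ZMod 2 := ∑ i, a i * x i

def walsh {n : ℕ} (f : BF n) (a : Fin n → ZMod 2) : ℤ :=
  ∑ x : Fin n → ZMod 2, (-1 : ℤ) ^ ((f x + bfInner a x).val)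

def hdist {n : ℕ} (f g : BF n) : ℕ :=
  (Finset.univ.filter (fun x => f x ≠ g x)).card

def wt {n : ℕ} (a : Fin n → ZMod 2) : ℕ :=
  (Finset.univ.filter (fun i => a i ≠ 0)).card

def resilient {n : ℕ} (m : ℕ) (f : BF n) : Prop :=
  ∀ a, wt a ≤ m → walsh f a = 0

def balanced {n : ℕ} (f : BF n) : Prop :=
  (Finset.univ.filter (fun x => f x = 1)).card = 2 ^ (n - 1)

noncomputable def nl {n : ℕ} (f : BF n) : ℕ :=
  sInf {d | ∃ (a : Fin n → ZMod 2) (c : ZMod 2), d = hdist f (fun x => c + bfInner a x)}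

def anf {n : ℕ} (f : BF n) (a : Fin n → ZMod 2) : ZMod 2 :=
  ∑ x ∈ Finset.univ.filter (fun x : Fin n → ZMod 2 => ∀ i, a i = 0 → x i = 0), f x

def degree {n : ℕ} (f : BF n) : ℕ :=
  (Finset.univ.filter (fun a => anf f a ≠ 0)).sup wt

noncomputable def AI {n : ℕ} (f : BF n) : ℕ :=
  sInf {d | ∃ g : BF n, g ≠ 0 ∧ ((∀ x, g x * f x = 0) ∨ (∀ x, g x * (1 + f x) = 0)) ∧ degree g = d}

lemma zmod2_cases : ∀ z : ZMod 2, z = 0 ∨ z = 1 := by decide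

def Tset {n : ℕ} (a : Fin n → ZMod 2) : Finset (Fin n → ZMod 2) :=
  Finset.univ.filter (fun x => ∀ i, a i = 0 → x i = 0)

lemma mem_Tset {n : ℕ} {a x : Fin n → ZMod 2} :
    x ∈ Tset a ↔ ∀ i, a i = 0 → x i = 0 := by
  simp [Tset]

lemma anf_eq {n : ℕ} (f : BF n) (a : Fin n → ZMod 2) :
    anf f a = ∑ x ∈ Tset a, f x := rfl

lemma sum_zmod2 (F : ZMod 2 → ZMod 2) : ∑ c : ZMod 2, F c = F 0 + F 1 := by
  have : (univ : Finset (ZMod 2)) = {0, 1} := by decide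
  rw [this, Finset.sum_insert (by decide), Finset.sum_singleton]

lemma anf_snoc_zero {n : ℕ} (f : BF (n + 1)) (a : Fin n → ZMod 2) :
    anf f (Fin.snoc a 0) = ∑ x ∈ Tset a, f (Fin.snoc x 0) := by
  rw [anf_eq]
  refine Finset.sum_nbij' (i := fun y => Fin.init y) (j := fun x => Fin.snoc x 0)
    ?_ ?_ ?_ ?_ ?_
  · intro y hy
    rw [mem_Tset] at hy ⊢
    intro i hi
    have := hy i.castSucc (by rwa [Fin.snoc_castSucc])
    simpa [Fin.init] using this
  · intro x hx
    rw [mem_Tset] at hx ⊢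
    intro i
    refine Fin.lastCases ?_ ?_ i
    · intro _; simp only [Fin.snoc_last]
    · intro j hj
      rw [Fin.snoc_castSucc] at hj
      simp only [Fin.snoc_castSucc]
      exact hx j hj
  · intro y hy
    rw [mem_Tset] at hy
    have hl : y (Fin.last n) = 0 := hy (Fin.last n) (by rw [Fin.snoc_last])
    rw [← hl]
    exact Fin.snoc_init_self y
  · intro x _
    simp
  · intro y hy
    rw [mem_Tset] at hy
    have hl : y (Fin.last n) = 0 := hy (Fin.last n) (by rw [Fin.snoc_last])
    congr 1
    rw [← hl]
    exact (Fin.snoc_init_self y).symm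

lemma anf_snoc_one {n : ℕ} (f : BF (n + 1)) (a : Fin n → ZMod 2) :
    anf f (Fin.snoc a 1) = ∑ x ∈ Tset a, (f (Fin.snoc x 0) + f (Fin.snoc x 1)) := by
  have step : ∀ x : Fin n → ZMod 2,
      f (Fin.snoc x 0) + f (Fin.snoc x 1) = ∑ c : ZMod 2, f (Fin.snoc x c) := by
    intro x; rw [sum_zmod2]
  calc anf f (Fin.snoc a 1)
      = ∑ p ∈ Tset a ×ˢ (univ : Finset (ZMod 2)), f (Fin.snoc p.1 p.2) := by
        rw [anf_eq]
        refine Finset.sum_nbij' (i := fun y => (Fin.init y, y (Fin.last n)))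
          (j := fun p => Fin.snoc p.1 p.2) ?_ ?_ ?_ ?_ ?_
        · intro y hy
          rw [mem_Tset] at hy
          rw [Finset.mem_product]
          refine ⟨?_, Finset.mem_univ _⟩
          rw [mem_Tset]
          intro i hi
          have := hy i.castSucc (by rwa [Fin.snoc_castSucc])
          simpa [Fin.init] using this
        · intro p hp
          rw [Finset.mem_product] at hp
          rw [mem_Tset] at hp ⊢
          intro i
          refine Fin.lastCases ?_ ?_ i
          · intro hc
            rw [Fin.snoc_last] at hc
            exact absurd hc (by decide)
          · intro j hj
            rw [Fin.snoc_castSucc] at hj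
            simp only [Fin.snoc_castSucc]
            exact hp.1 j hj
        · intro y _
          exact Fin.snoc_init_self y
        · intro p _
          simp [Fin.init_snoc, Fin.snoc_last]
        · intro y _
          congr 1
          exact (Fin.snoc_init_self y).symm
    _ = ∑ x ∈ Tset a, ∑ c : ZMod 2, f (Fin.snoc x c) := by rw [Finset.sum_product]
    _ = ∑ x ∈ Tset a, (f (Fin.snoc x 0) + f (Fin.snoc x 1)) := by
        exact Finset.sum_congr rfl (fun x _ => (step x).symm)

lemma wt_le_snoc {n : ℕ} (a : Fin n → ZMod 2) (c : ZMod 2) :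
    wt a ≤ wt (Fin.snoc a c) := by
  apply Finset.card_le_card_of_injOn (f := Fin.castSucc)
  · intro i hi
    rw [Finset.mem_coe, Finset.mem_filter] at hi ⊢
    refine ⟨Finset.mem_univ _, ?_⟩
    simp only [Fin.snoc_castSucc]
    exact hi.2
  · intro i _ j _ hij
    exact Fin.castSucc_injective n hij

lemma degree_restr {n : ℕ} (f : BF (n + 1)) (c : ZMod 2) :
    degree (fun x => f (Fin.snoc x c)) ≤ degree f := by
  apply Finset.sup_le
  intro a ha
  rw [Finset.mem_filter] at ha
  have ha' : ∑ x ∈ Tset a, f (Fin.snoc x c) ≠ 0 := ha.2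
  have key : anf f (Fin.snoc a 0) ≠ 0 ∨ anf f (Fin.snoc a 1) ≠ 0 := by
    rcases zmod2_cases c with rfl | rfl
    · left; rw [anf_snoc_zero]; exact ha'
    · by_contra hcon
      push_neg at hcon
      apply ha'
      have h0 : ∑ x ∈ Tset a, f (Fin.snoc x 0) = 0 := by
        rw [← anf_snoc_zero]; exact hcon.1
      have h1 : ∑ x ∈ Tset a, f (Fin.snoc x 0) + ∑ x ∈ Tset a, f (Fin.snoc x 1) = 0 := by
        rw [← Finset.sum_add_distrib, ← anf_snoc_one]; exact hcon.2
      rw [h0, zero_add] at h1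
      exact h1
  rcases key with hk | hk
  · calc wt a ≤ wt (Fin.snoc a 0) := wt_le_snoc a 0
      _ ≤ degree f := Finset.le_sup (Finset.mem_filter.mpr ⟨Finset.mem_univ _, hk⟩)
  · calc wt a ≤ wt (Fin.snoc a 1) := wt_le_snoc a 1
      _ ≤ degree f := Finset.le_sup (Finset.mem_filter.mpr ⟨Finset.mem_univ _, hk⟩)

lemma AI_mem {m : ℕ} (f : BF m) :
    ∃ p : BF m, p ≠ 0 ∧ ((∀ x, p x * f x = 0) ∨ (∀ x, p x * (1 + f x) = 0)) ∧
      degree p = AI f := by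
  have hne : {d | ∃ p : BF m, p ≠ 0 ∧ ((∀ x, p x * f x = 0) ∨ (∀ x, p x * (1 + f x) = 0)) ∧
      degree p = d}.Nonempty := by
    by_cases hf : ∀ x, f x = 1
    · refine ⟨degree (fun _ => (1 : ZMod 2)), fun _ => 1, ?_, ?_, rfl⟩
      · intro hh
        have := congrFun hh (fun _ => 0)
        simpa using this
      · right
        intro x
        show (1 : ZMod 2) * (1 + f x) = 0
        rw [hf x]
        decide
    · push_neg at hf
      obtain ⟨x0, hx0⟩ := hf
      refine ⟨degree (fun x => 1 + f x), fun x => 1 + f x, ?_, ?_, rfl⟩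
      · intro hh
        have := congrFun hh x0
        rcases zmod2_cases (f x0) with h | h
        · rw [h] at this; simpa using this
        · exact hx0 h
      · left
        intro x
        show (1 + f x) * f x = 0
        rcases zmod2_cases (f x) with h | h <;> rw [h] <;> decide
  obtain ⟨p, hp, hann, hd⟩ := Nat.sInf_mem hne
  exact ⟨p, hp, hann, hd⟩

lemma AI_le {m : ℕ} (f p : BF m) (hp : p ≠ 0)
    (hann : (∀ x, p x * f x = 0) ∨ (∀ x, p x * (1 + f x) = 0)) :
    AI f ≤ degree p :=
  Nat.sInf_le ⟨p, hp, hann, rfl⟩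

lemma AI_le_shift {m : ℕ} (f p : BF m) (hp : p ≠ 0) (e : ZMod 2)
    (hann : ∀ x, p x * (e + f x) = 0) : AI f ≤ degree p := by
  rcases zmod2_cases e with rfl | rfl
  · exact AI_le f p hp (Or.inl (by simpa using hann))
  · exact AI_le f p hp (Or.inr hann)

def snoc3 {n : ℕ} (y : Fin n → ZMod 2) (a b c : ZMod 2) : Fin (n + 3) → ZMod 2 :=
  Fin.snoc (Fin.snoc (Fin.snoc y a) b) c

section Ext3

variable {n : ℕ} (y : Fin n → ZMod 2) (a b c : ZMod 2)

lemma ext3_n2 : snoc3 y a b c ⟨n + 2, by simp⟩ = c := by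
  show (Fin.snoc (Fin.snoc (Fin.snoc y a) b) c : Fin (n + 3) → ZMod 2)
    (Fin.last (n + 2)) = c
  rw [Fin.snoc_last]

lemma ext3_n1 : snoc3 y a b c ⟨n + 1, by simp⟩ = b := by
  show (Fin.snoc (Fin.snoc (Fin.snoc y a) b) c : Fin (n + 3) → ZMod 2)
    ((Fin.last (n + 1)).castSucc) = b
  rw [Fin.snoc_castSucc, Fin.snoc_last]

lemma ext3_n0 : snoc3 y a b c ⟨n, by simp⟩ = a := by
  show (Fin.snoc (Fin.snoc (Fin.snoc y a) b) c : Fin (n + 3) → ZMod 2)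
    ((Fin.last n).castSucc.castSucc) = a
  rw [Fin.snoc_castSucc, Fin.snoc_castSucc, Fin.snoc_last]

lemma ext3_lt (i : Fin n) : snoc3 y a b c ⟨i.val, Nat.lt_add_right 3 i.isLt⟩ = y i := by
  show (Fin.snoc (Fin.snoc (Fin.snoc y a) b) c : Fin (n + 3) → ZMod 2)
    (i.castSucc.castSucc.castSucc) = y i
  rw [Fin.snoc_castSucc, Fin.snoc_castSucc, Fin.snoc_castSucc]

lemma snoc3_decomp (v : Fin (n + 3) → ZMod 2) :
    snoc3 (fun i : Fin n => v ⟨i.val, Nat.lt_add_right 3 i.isLt⟩)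
      (v ⟨n, by simp⟩) (v ⟨n + 1, by simp⟩) (v ⟨n + 2, by simp⟩) = v := by
  funext j
  by_cases hj : j.val < n
  · have hje : j = (⟨((⟨j.val, hj⟩ : Fin n)).val, by omega⟩ : Fin (n + 3)) := Fin.ext rfl
    rw [hje, ext3_lt]
  · rcases (by omega : j.val = n ∨ j.val = n + 1 ∨ j.val = n + 2) with hj' | hj' | hj'
    · have hje : j = (⟨n, by omega⟩ : Fin (n + 3)) := Fin.ext hj'
      rw [hje, ext3_n0]
    · have hje : j = (⟨n + 1, by omega⟩ : Fin (n + 3)) := Fin.ext hj'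
      rw [hje, ext3_n1]
    · have hje : j = (⟨n + 2, by omega⟩ : Fin (n + 3)) := Fin.ext hj'
      rw [hje, ext3_n2]

end Ext3

theorem AI_G (n : ℕ) (g h : BF n) (G : BF (n + 3))
    (hG : ∀ v : Fin (n + 3) → ZMod 2,
      G v = v ⟨n + 2, by omega⟩ + v ⟨n + 1, by omega⟩
            + (1 + v ⟨n, by omega⟩) * g (fun i : Fin n => v ⟨i.val, by omega⟩)
            + v ⟨n, by omega⟩ * h (fun i : Fin n => v ⟨i.val, by omega⟩)) :
    min (AI g) (AI h) ≤ AI G := by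
  obtain ⟨p, hp0, hann, hdeg⟩ := AI_mem G
  obtain ⟨x0, a, b, c, hv⟩ : ∃ (x0 : Fin n → ZMod 2) (a b c : ZMod 2),
      p (snoc3 x0 a b c) ≠ 0 := by
    have hex : ∃ v, p v ≠ 0 := by
      by_contra hcon
      push_neg at hcon
      exact hp0 (funext fun v => hcon v)
    obtain ⟨v, hv⟩ := hex
    exact ⟨fun i : Fin n => v ⟨i.val, by omega⟩, v ⟨n, by omega⟩,
      v ⟨n + 1, by omega⟩, v ⟨n + 2, by omega⟩, by rwa [snoc3_decomp v]⟩
  have hp'0 : (fun y : Fin n → ZMod 2 =>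
      p (snoc3 y a b c)) ≠ 0 := by
    intro hh
    exact hv (congrFun hh x0)
  have hdp' : degree (fun y : Fin n → ZMod 2 =>
      p (snoc3 y a b c)) ≤ degree p :=
    le_trans (degree_restr (fun w : Fin (n + 1) → ZMod 2 =>
        p (Fin.snoc (Fin.snoc w b) c)) a)
      (le_trans (degree_restr (fun z : Fin (n + 2) → ZMod 2 => p (Fin.snoc z c)) b)
        (degree_restr p c))
  have hGext : ∀ y : Fin n → ZMod 2,
      G (snoc3 y a b c)
        = c + b + (1 + a) * g y + a * h y := by
    intro y
    rw [hG]
    rw [ext3_n2, ext3_n1, ext3_n0]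
    have hy : (fun i : Fin n =>
        snoc3 y a b c (⟨i.val, by omega⟩ : Fin (n + 3))) = y :=
      funext fun i => ext3_lt y a b c i
    rw [hy]
  have main : AI g ≤ degree (fun y : Fin n → ZMod 2 =>
      p (snoc3 y a b c))
      ∨ AI h ≤ degree (fun y : Fin n → ZMod 2 =>
      p (snoc3 y a b c)) := by
    rcases zmod2_cases a with rfl | rfl
    · left
      rcases hann with hann | hann
      · apply AI_le_shift g _ hp'0 (c + b)
        intro y
        have H := hann (snoc3 y 0 b c)
        rw [hGext y] at H
        have he : c + b + (1 + (0 : ZMod 2)) * g y + 0 * h y = (c + b) + g y := by ring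
        rw [he] at H
        exact H
      · apply AI_le_shift g _ hp'0 (1 + (c + b))
        intro y
        have H := hann (snoc3 y 0 b c)
        rw [hGext y] at H
        have he : 1 + (c + b + (1 + (0 : ZMod 2)) * g y + 0 * h y)
            = (1 + (c + b)) + g y := by ring
        rw [he] at H
        exact H
    · right
      rcases hann with hann | hann
      · apply AI_le_shift h _ hp'0 (c + b)
        intro y
        have H := hann (snoc3 y 1 b c)
        rw [hGext y] at H
        have he : c + b + (1 + (1 : ZMod 2)) * g y + 1 * h y = (c + b) + h y := by
          have h2 : (1 + 1 : ZMod 2) = 0 := by decide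
          rw [h2]; ring
        rw [he] at H
        exact H
      · apply AI_le_shift h _ hp'0 (1 + (c + b))
        intro y
        have H := hann (snoc3 y 1 b c)
        rw [hGext y] at H
        have he : 1 + (c + b + (1 + (1 : ZMod 2)) * g y + 1 * h y)
            = (1 + (c + b)) + h y := by
          have h2 : (1 + 1 : ZMod 2) = 0 := by decide
          rw [h2]; ring
        rw [he] at H
        exact H
  rcases main with hm | hm
  · exact le_trans (min_le_left _ _) (le_trans hm (le_trans hdp' (le_of_eq hdeg)))
  · exact le_trans (min_le_right _ _) (le_trans hm (le_trans hdp' (le_of_eq hdeg)))
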